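/- arXiv:1503.01519 — 2 statements merged into one kernel-verified Lean document; each statement's English description precedes it below -/
import Mathlib

section
/- Let Ω ⊆ ℂ be a hyperbolic domain and let z ∈ Ω satisfy ε_Ω(z)·|z| < 1. Then d_Ω(z) ≤ ε_Ω(z)·(1+|z|²) / (1 − ε_Ω(z)·|z|). -/
open Set Metric
open scoped Classical

/-- The quantity `τ(z,w) = |z-w| / |1 + z·conj w|`, valued in `ℝ≥0∞` so that
antipodal pairs (where the denominator vanishes) get the value `∞`. -/
noncomputable def tauE (z w : ℂ) : ENNReal :=
  ENNReal.ofReal (‖z - w‖) / ENNReal.ofReal (‖1 + z * (starRingEnd ℂ) w‖)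

/-- `ε_Ω(z)`: the infimum of `τ(z,a)` over the boundary of `Ω` in the Riemann sphere,
i.e. over the frontier of `Ω` in `ℂ`, together with `∞` (where `τ(z,∞) = 1/|z|`)
when `Ω` is unbounded. -/
noncomputable def epsOm (Ω : Set ℂ) (z : ℂ) : ℝ :=
  ((⨅ a ∈ frontier Ω, tauE z a) ⊓
    (if Bornology.IsBounded Ω then ⊤ else 1 / ENNReal.ofReal ‖z‖)).toReal

/-- A domain in `ℂ` is hyperbolic if it is open, connected,
and its complement contains at least two points. -/
def IsHyperbolicDomain (Ω : Set ℂ) : Prop :=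
  IsOpen Ω ∧ IsConnected Ω ∧ Set.Nontrivial Ωᶜ

/-! For a frontier point `a` of `Ω`,
`|z - a| = τ(z,a) |1 + z ā| ≤ τ(z,a) (1 + |z|² + |z| |z - a|)`. Since `x ↦ x / (1 + |z|² + |z| x)`
is increasing, `d / (1 + |z|² + |z| d) ≤ τ(z,a)` for `d = d_Ω(z)`; this quantity is also below
`τ(z,∞) = 1/|z|`, hence below `ε_Ω(z)`, and solving for `d` gives the bound.
The infimum defining `ε_Ω(z)` is finite because `∂Ω` is not contained in `{-1/z̄}`: the connected
set `ℂ ∖ {-1/z̄}` meets both `Ω` and its complement. -/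

open ComplexConjugate

theorem IsPreconnected.inter_frontier_nonempty {X : Type*} [TopologicalSpace X] {s t : Set X}
    (hs : IsPreconnected s) (hst : (s ∩ t).Nonempty) (hsc : (s \ t).Nonempty) :
    (s ∩ frontier t).Nonempty := by
  by_contra hempty
  have mem_interior {u : Set X} {x : X} (hx : x ∈ s) (hxu : x ∈ u)
      (hfr : frontier u = frontier t) : x ∈ interior u := by
    have hx' : x ∈ interior u ∪ frontier u :=
      closure_eq_interior_union_frontier u ▸ subset_closure hxu
    exact hx'.resolve_right fun hf => hempty ⟨x, hx, hfr ▸ hf⟩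
  have hcover : s ⊆ interior t ∪ interior tᶜ := fun x hx => by
    by_cases hxt : x ∈ t
    · exact Or.inl (mem_interior hx hxt rfl)
    · exact Or.inr (mem_interior hx hxt (frontier_compl t))
  obtain ⟨x, -, hxt, hxt'⟩ := hs _ _ isOpen_interior isOpen_interior hcover
    (hst.mono fun x hx => ⟨hx.1, mem_interior hx.1 hx.2 rfl⟩)
    (hsc.mono fun x hx => ⟨hx.1, mem_interior hx.1 hx.2 (frontier_compl t)⟩)
  exact interior_subset hxt' (interior_subset hxt)

theorem IsHyperbolicDomain.exists_mem_frontier_ne {Ω : Set ℂ} (hΩ : IsHyperbolicDomain Ω)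
    (p : ℂ) : ∃ a ∈ frontier Ω, a ≠ p := by
  obtain ⟨hopen, hconn, hcompl⟩ := hΩ
  have hcompl_ne : (({p}ᶜ : Set ℂ) \ Ω).Nonempty := by
    obtain ⟨q, hq, hqp⟩ := hcompl.exists_ne p
    exact ⟨q, hqp, hq⟩
  have hΩ_ne : (({p}ᶜ : Set ℂ) ∩ Ω).Nonempty :=
    inter_comm Ω _ ▸ (dense_compl_singleton p).inter_open_nonempty Ω hopen hconn.nonempty
  have hpunctured : IsPreconnected ({p}ᶜ : Set ℂ) :=
    (isConnected_compl_singleton_of_one_lt_rank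
      (by simp [Complex.rank_real_complex]) p).isPreconnected
  obtain ⟨a, hap, ha⟩ := hpunctured.inter_frontier_nonempty hΩ_ne hcompl_ne
  exact ⟨a, ha, hap⟩

theorem one_add_mul_conj_ne_zero {z a : ℂ} (ha : a ≠ -(conj z)⁻¹) :
    1 + z * conj a ≠ 0 := by
  contrapose! ha
  have hconj : conj z * a = -1 := by
    simpa [mul_comm, eq_neg_iff_add_eq_zero, add_comm] using congrArg conj ha
  have hz : conj z ≠ 0 := by rintro h0; simp [h0] at hconj
  field_simp
  linear_combination hconj

theorem tauE_ne_top {z a : ℂ} (ha : a ≠ -(conj z)⁻¹) : tauE z a ≠ ⊤ :=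
  ENNReal.div_ne_top ENNReal.ofReal_ne_top
    (by simpa using norm_pos_iff.mpr (one_add_mul_conj_ne_zero ha))

theorem norm_one_add_mul_conj_le (z a : ℂ) :
    ‖1 + z * conj a‖ ≤ 1 + ‖z‖ ^ 2 + ‖z‖ * ‖z - a‖ := by
  have ha : ‖a‖ ≤ ‖z‖ + ‖z - a‖ := by simpa using norm_sub_le z (z - a)
  calc ‖1 + z * conj a‖ ≤ 1 + ‖z‖ * ‖a‖ := by
        simpa [norm_mul, Complex.norm_conj] using norm_add_le 1 (z * conj a)
    _ ≤ 1 + ‖z‖ * (‖z‖ + ‖z - a‖) := by gcongr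
    _ = 1 + ‖z‖ ^ 2 + ‖z‖ * ‖z - a‖ := by ring

theorem monotoneOn_div_one_add_sq_add_mul {r : ℝ} (hr : 0 ≤ r) :
    MonotoneOn (fun x => x / (1 + r ^ 2 + r * x)) (Ici 0) := by
  intro x (hx : 0 ≤ x) y (hy : 0 ≤ y) hxy
  rw [div_le_div_iff₀ (by positivity) (by positivity)]
  nlinarith

theorem ofReal_div_le_tauE {z a : ℂ} {x : ℝ} (hx : 0 ≤ x) (hxa : x ≤ ‖z - a‖) :
    ENNReal.ofReal (x / (1 + ‖z‖ ^ 2 + ‖z‖ * x)) ≤ tauE z a := by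
  rcases eq_or_ne z a with rfl | hza
  · simp [le_antisymm (hxa.trans_eq (by simp)) hx]
  rcases (norm_nonneg (1 + z * conj a)).eq_or_lt with hD | hD
  · rw [tauE, ← hD, ENNReal.ofReal_zero, ENNReal.div_zero (by simpa [sub_eq_zero] using hza)]
    exact le_top
  rw [tauE, ← ENNReal.ofReal_div_of_pos hD]
  refine ENNReal.ofReal_le_ofReal
    ((monotoneOn_div_one_add_sq_add_mul (norm_nonneg z) hx (hx.trans hxa) hxa).trans ?_)
  exact div_le_div_of_nonneg_left (norm_nonneg _) hD (norm_one_add_mul_conj_le z a)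

theorem ofReal_div_le_one_div_ofReal {r x : ℝ} (hr : 0 ≤ r) (hx : 0 ≤ x) :
    ENNReal.ofReal (x / (1 + r ^ 2 + r * x)) ≤ 1 / ENNReal.ofReal r := by
  rcases hr.eq_or_lt with rfl | hr
  · simp
  rw [one_div, ← ENNReal.ofReal_inv_of_pos hr]
  refine ENNReal.ofReal_le_ofReal ?_
  rw [div_le_iff₀ (by positivity), inv_mul_eq_div, le_div_iff₀ hr]
  nlinarith

theorem IsHyperbolicDomain.div_le_epsOm {Ω : Set ℂ} (hΩ : IsHyperbolicDomain Ω) (z : ℂ) :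
    infDist z (frontier Ω) / (1 + ‖z‖ ^ 2 + ‖z‖ * infDist z (frontier Ω)) ≤
      epsOm Ω z := by
  obtain ⟨a, ha, hap⟩ := hΩ.exists_mem_frontier_ne (-(conj z)⁻¹)
  have hI_ne_top : (⨅ a ∈ frontier Ω, tauE z a) ≠ ⊤ :=
    ne_top_of_le_ne_top (tauE_ne_top hap) (biInf_le _ ha)
  rw [epsOm, ← ENNReal.ofReal_le_iff_le_toReal (ne_top_of_le_ne_top hI_ne_top inf_le_left)]
  refine le_inf (le_iInf₂ fun a ha => ofReal_div_le_tauE infDist_nonneg ?_) ?_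
  · exact (infDist_le_dist_of_mem ha).trans_eq (dist_eq_norm z a)
  · split_ifs
    · exact le_top
    · exact ofReal_div_le_one_div_ofReal (norm_nonneg z) infDist_nonneg

theorem dist_le_eps_upper_bound_general (Ω : Set ℂ) (hΩ : IsHyperbolicDomain Ω) (z : ℂ)
    (h : epsOm Ω z * ‖z‖ < 1) :
    Metric.infDist z (frontier Ω) ≤
      epsOm Ω z * (1 + ‖z‖ ^ 2) / (1 - epsOm Ω z * ‖z‖) := by
  have hd : 0 ≤ infDist z (frontier Ω) := infDist_nonneg
  have hbound := hΩ.div_le_epsOm z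
  rw [div_le_iff₀ (by positivity)] at hbound
  rw [le_div_iff₀ (sub_pos.mpr h)]
  linear_combination hbound

theorem dist_le_eps_upper_bound (Ω : Set ℂ) (hΩ : IsHyperbolicDomain Ω) (z : ℂ) (hz : z ∈ Ω)
    (h : epsOm Ω z * ‖z‖ < 1) :
    Metric.infDist z (frontier Ω) ≤
      epsOm Ω z * (1 + ‖z‖ ^ 2) / (1 - epsOm Ω z * ‖z‖) :=
  dist_le_eps_upper_bound_general Ω hΩ z h
end

section
/- Let Ω ⊆ ℂ be a hyperbolic domain, let p : 𝔻 → Ω be a surjective holomorphic covering map from the unit disk, and let f : Ω → ℂ be an injective holomorphic disk-convex map such that f(Ω) is a hyperbolic domain. Then C(Ω) ≤ 2·C(f(Ω)), where C(Ω) := inf_{z∈𝔻} d_Ω(p(z)) / ((1−|z|²)·|p′(z)|) and C(f(Ω)) := inf_{z∈𝔻} d_{f(Ω)}(f(p(z))) / ((1−|z|²)·|f′(p(z))|·|p′(z)|). -/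
open Set Metric
open scoped Classical

/-!
Let `w = p z` and `d = d_Ω(w)`. The disk `D = B(w, d)` lies in `Ω`, so `f(D)` is convex. For
`a ∉ f(D)` a supporting line separates `a` from `f(D)`; composing `f` with an affine map turns
this into a holomorphic function on `D` with positive real part, and the Schwarz lemma (after a
Cayley transform) yields `|f'(w)| d ≤ 2 |a - f w|`. Hence `B(f w, |f'(w)| d / 2) ⊆ f(Ω)`, that is
`d_Ω(w) |f'(w)| ≤ 2 d_{f(Ω)}(f w)`. Dividing by `(1 - |z|²) |f'(w)| |p'(z)|` (note `f'(w) ≠ 0` by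
injectivity) gives the bound pointwise on `𝔻`, and it passes to the infima.
-/

open Filter Topology ComplexConjugate

lemma not_eventually_eq_of_injOn {X Y : Type*} [TopologicalSpace X] {f : X → Y} {s : Set X}
    {x : X} [(𝓝[≠] x).NeBot] (hinj : InjOn f s) (hs : s ∈ 𝓝 x) :
    ¬ ∀ᶠ z in 𝓝 x, f z = f x := by
  intro h
  have : ∀ᶠ z in 𝓝[≠] x, (f z = f x ∧ z ∈ s) ∧ z ≠ x :=
    ((h.and hs).filter_mono nhdsWithin_le_nhds).and self_mem_nhdsWithin
  obtain ⟨z, ⟨hfz, hzs⟩, hzx⟩ := this.exists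
  exact hzx (hinj hzs (mem_of_mem_nhds hs) hfz)

namespace Complex

theorem isOpen_image_of_injOn {f : ℂ → ℂ} {U : Set ℂ} (hU : IsOpen U)
    (hf : DifferentiableOn ℂ f U) (hinj : InjOn f U) : IsOpen (f '' U) := by
  refine isOpen_iff_mem_nhds.2 ?_
  rintro _ ⟨z, hz, rfl⟩
  rcases (hf.analyticAt (hU.mem_nhds hz)).eventually_constant_or_nhds_le_map_nhds with h | h
  · exact absurd h (not_eventually_eq_of_injOn hinj (hU.mem_nhds hz))
  · exact h (image_mem_map (hU.mem_nhds hz))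

lemma exists_hasStrictDerivAt_pow_eq_of_analyticOrderAt_eq {g : ℂ → ℂ} {w : ℂ} {n : ℕ}
    (hg : AnalyticAt ℂ g w) (hn : analyticOrderAt g w = n) (hn0 : n ≠ 0) :
    ∃ φ : ℂ → ℂ, ∃ b ≠ 0, HasStrictDerivAt φ b w ∧ φ w = 0 ∧ ∀ᶠ z in 𝓝 w, g z = φ z ^ n := by
  obtain ⟨h, hha, hhw, hgh⟩ := hg.analyticOrderAt_eq_natCast.1 hn
  obtain ⟨b, hb⟩ := IsAlgClosed.exists_pow_nat_eq (h w) (Nat.pos_of_ne_zero hn0)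
  have hb0 : b ≠ 0 := by rintro rfl; exact hhw (by rw [← hb, zero_pow hn0])
  set k : ℂ → ℂ := fun z => b * (h z / h w) ^ (n⁻¹ : ℂ)
  have hka : AnalyticAt ℂ k w :=
    analyticAt_const.mul (hha.div_const.cpow analyticAt_const (by simp [hhw]))
  have hkw : k w = b := by simp [k, hhw]
  set φ : ℂ → ℂ := fun z => (z - w) * k z
  have hφa : AnalyticAt ℂ φ w := by fun_prop
  have hφ : HasDerivAt φ b w := by
    simpa [hkw] using ((hasDerivAt_id w).sub_const w).fun_mul hka.differentiableAt.hasDerivAt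
  refine ⟨φ, b, hb0, hφ.deriv ▸ hφa.hasStrictDerivAt, by simp [φ], ?_⟩
  filter_upwards [hgh] with z hz
  rw [hz, smul_eq_mul, mul_pow, mul_pow, cpow_nat_inv_pow _ hn0, hb, mul_div_cancel₀ _ hhw]

/-- Near `w`, `φ` takes both values `y` and `ω y` for a primitive `n`-th root of unity `ω`. -/
lemma not_injOn_pow_of_hasStrictDerivAt {φ : ℂ → ℂ} {b w : ℂ} {n : ℕ}
    (hφ : HasStrictDerivAt φ b w) (hb : b ≠ 0) (hφw : φ w = 0) (hn : 2 ≤ n) {s : Set ℂ}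
    (hs : s ∈ 𝓝 w) : ¬ InjOn (fun z => φ z ^ n) s := by
  intro hinj
  have hω := isPrimitiveRoot_exp n (by omega)
  set ω := exp (2 * Real.pi * I / n)
  have himg : ∀ᶠ y in 𝓝 (0 : ℂ), y ∈ φ '' s := by
    rw [← hφw, ← hφ.map_nhds_eq hb]
    exact image_mem_map hs
  have hωimg : ∀ᶠ y in 𝓝 (0 : ℂ), ω * y ∈ φ '' s :=
    (by simpa using (continuous_const_mul ω).tendsto 0 : Tendsto (ω * ·) (𝓝 0) (𝓝 0)).eventually
      himg
  have : ∀ᶠ y in 𝓝[≠] (0 : ℂ), (y ∈ φ '' s ∧ ω * y ∈ φ '' s) ∧ y ≠ 0 :=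
    (eventually_nhdsWithin_of_eventually_nhds (himg.and hωimg)).and self_mem_nhdsWithin
  obtain ⟨_, ⟨⟨z₁, hz₁, rfl⟩, ⟨z₂, hz₂, hz₂eq⟩⟩, hy0⟩ := this.exists
  have hz : z₂ = z₁ := hinj hz₂ hz₁ (by simp only [hz₂eq, mul_pow, hω.pow_eq_one, one_mul])
  have : (1 - ω) * φ z₁ = 0 := by rw [hz] at hz₂eq; linear_combination hz₂eq
  exact (mul_eq_zero.1 this).elim (fun h => hω.ne_one (by omega) (sub_eq_zero.1 h).symm) hy0

theorem deriv_ne_zero_of_injOn {f : ℂ → ℂ} {U : Set ℂ} (hU : IsOpen U)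
    (hf : DifferentiableOn ℂ f U) (hinj : InjOn f U) {w : ℂ} (hw : w ∈ U) : deriv f w ≠ 0 := by
  intro hf'
  have hfa := hf.analyticAt (hU.mem_nhds hw)
  have htop : analyticOrderAt (f · - f w) w ≠ ⊤ := by
    rw [ne_eq, analyticOrderAt_eq_top]
    simpa only [sub_eq_zero] using not_eventually_eq_of_injOn hinj (hU.mem_nhds hw)
  obtain ⟨n, hn⟩ := ENat.ne_top_iff_exists.1 htop
  have hn2 : 2 ≤ n := by
    have h1 : 1 ≤ analyticOrderAt (deriv f) w :=
      Order.one_le_iff_ne_zero.2 (analyticOrderAt_ne_zero.2 ⟨hfa.deriv, hf'⟩)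
    have : ((1 + 1 : ℕ) : ℕ∞) ≤ n := by
      rw [hn, ← hfa.analyticOrderAt_deriv_add_one, Nat.cast_add, Nat.cast_one]
      gcongr
    exact_mod_cast this
  obtain ⟨φ, b, hb, hφ, hφw, hgφ⟩ := exists_hasStrictDerivAt_pow_eq_of_analyticOrderAt_eq
    (by fun_prop : AnalyticAt ℂ (f · - f w) w) hn.symm (by omega)
  refine not_injOn_pow_of_hasStrictDerivAt hφ hb hφw hn2 (inter_mem (hU.mem_nhds hw) hgφ) ?_
  intro z₁ hz₁ z₂ hz₂ heq
  exact hinj hz₁.1 hz₂.1 (sub_left_injective (hz₁.2.trans (heq.trans hz₂.2.symm)))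

lemma norm_sub_lt_norm_add_conj {ζ c : ℂ} (hζ : 0 < ζ.re) (hc : 0 < c.re) :
    ‖ζ - c‖ < ‖ζ + conj c‖ := by
  rw [← sq_lt_sq₀ (norm_nonneg _) (norm_nonneg _), Complex.sq_norm, Complex.sq_norm]
  simp only [normSq_apply, sub_re, sub_im, add_re, add_im, conj_re, conj_im]
  nlinarith

/-- The Schwarz lemma applied to the Cayley transform `ζ ↦ (ζ - c) / (ζ + conj c)`,
`c = G w`, which maps the right half-plane into the unit disk. -/
theorem norm_deriv_mul_le_of_re_pos {G : ℂ → ℂ} {w : ℂ} {r : ℝ} (hr : 0 < r)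
    (hG : DifferentiableOn ℂ G (ball w r)) (hre : ∀ z ∈ ball w r, 0 < (G z).re) :
    ‖deriv G w‖ * r ≤ 2 * (G w).re := by
  set c := G w
  have hc : 0 < c.re := hre w (mem_ball_self hr)
  have hden : ∀ z ∈ ball w r, G z + conj c ≠ 0 := fun z hz h0 => by
    have := congrArg re h0
    simp only [add_re, conj_re, zero_re] at this
    linarith [hre z hz]
  have hcc : c + conj c = (2 * c.re : ℝ) := by rw [add_conj, ofReal_mul, ofReal_ofNat]
  set H : ℂ → ℂ := fun z => (G z - c) / (G z + conj c)
  have hHmaps : MapsTo H (ball w r) (closedBall (H w) 1) := by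
    intro z hz
    rw [mem_closedBall, show H w = 0 by simp [H, c], dist_zero_right, norm_div,
      div_le_one (norm_pos_iff.2 (hden z hz))]
    exact (norm_sub_lt_norm_add_conj (hre z hz) hc).le
  have hGw : HasDerivAt G (deriv G w) w :=
    (hG.differentiableAt (isOpen_ball.mem_nhds (mem_ball_self hr))).hasDerivAt
  have hH : HasDerivAt H (deriv G w / (c + conj c)) w :=
    ((hGw.sub_const c).fun_div (hGw.add_const (conj c)) (hden w (mem_ball_self hr))).congr_deriv
      (by rw [sub_self, zero_mul, sub_zero, sq, mul_div_mul_right _ _ (hden w (mem_ball_self hr))])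
  have hHd : DifferentiableOn ℂ H (ball w r) := (hG.sub_const c).div (hG.add_const _) hden
  have hschwarz := norm_deriv_le_div_of_mapsTo_ball hHd hHmaps hr
  rw [hH.deriv, hcc, norm_div, norm_real, Real.norm_of_nonneg (by positivity),
    div_le_div_iff₀ (by positivity) hr] at hschwarz
  linarith

theorem ball_subset_image_of_convex {f : ℂ → ℂ} {w : ℂ} {r : ℝ} (hr : 0 < r)
    (hf : DifferentiableOn ℂ f (ball w r)) (hinj : InjOn f (ball w r))
    (hconv : Convex ℝ (f '' ball w r)) :
    ball (f w) (‖deriv f w‖ * r / 2) ⊆ f '' ball w r := by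
  intro a ha
  by_contra ha'
  obtain ⟨ℓ, hℓ⟩ :=
    geometric_hahn_banach_open_point hconv (isOpen_image_of_injOn isOpen_ball hf hinj) ha'
  set v := (InnerProductSpace.toDual ℝ ℂ).symm ℓ
  have hℓv : ∀ z, ℓ z = (z * conj v).re := fun z => by
    rw [← Complex.inner, InnerProductSpace.toDual_symm_apply]
  have hv : v ≠ 0 := by
    rintro hv
    have := hℓ (f w) (mem_image_of_mem f (mem_ball_self hr))
    simp [hℓv, hv] at this
  set G : ℂ → ℂ := fun z => (a - f z) * conj v
  have hGre : ∀ z ∈ ball w r, 0 < (G z).re := fun z hz => by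
    have := hℓ (f z) (mem_image_of_mem f hz)
    simp only [G, sub_mul, sub_re, ← hℓv]
    linarith
  have hG : HasDerivAt G (-deriv f w * conj v) w :=
    ((hf.differentiableAt (isOpen_ball.mem_nhds (mem_ball_self hr))).hasDerivAt.const_sub
      a).mul_const (conj v)
  have hGd : DifferentiableOn ℂ G (ball w r) :=
    ((differentiableOn_const a).sub hf).mul_const (conj v)
  have hbound := norm_deriv_mul_le_of_re_pos hr hGd hGre
  have hGw : (G w).re ≤ ‖a - f w‖ * ‖v‖ := by
    simpa [G] using re_le_norm (G w)
  rw [hG.deriv, norm_mul, norm_neg, norm_conj] at hbound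
  rw [mem_ball, dist_eq_norm] at ha
  nlinarith [norm_pos_iff.2 hv]

end Complex

lemma ball_infDist_frontier_subset {E : Type*} [NormedAddCommGroup E] [NormedSpace ℝ E]
    [FiniteDimensional ℝ E] {s : Set E} {x : E} (hx : x ∈ s) :
    ball x (infDist x (frontier s)) ⊆ s := by
  rcases eq_or_ne s univ with rfl | hs
  · exact subset_univ _
  obtain ⟨y, hy, hxy⟩ := exists_mem_frontier_infDist_compl_eq_dist hx hs
  exact (ball_subset_ball ((infDist_le_dist_of_mem hy).trans_eq hxy.symm)).trans
    (ball_infDist_compl_subset (x := x))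

lemma le_infDist_frontier_of_ball_subset {X : Type*} [PseudoMetricSpace X] {s : Set X} {x : X}
    {r : ℝ} (hs : IsOpen s) (hfr : (frontier s).Nonempty) (h : ball x r ⊆ s) :
    r ≤ infDist x (frontier s) :=
  (le_infDist hfr).2 fun _ hy => not_lt.1 fun hlt =>
    disjoint_left.1 (disjoint_frontier_iff_isOpen.2 hs) hy (h (mem_ball'.2 hlt))

theorem infDist_frontier_mul_norm_deriv_le {Ω : Set ℂ} {f : ℂ → ℂ}
    (hf : DifferentiableOn ℂ f Ω) (hinj : InjOn f Ω)
    (hconv : ∀ (c : ℂ) (r : ℝ), ball c r ⊆ Ω → Convex ℝ (f '' ball c r))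
    (hfΩ : IsOpen (f '' Ω)) (hfΩc : (f '' Ω)ᶜ.Nonempty) {w : ℂ} (hw : w ∈ Ω) :
    infDist w (frontier Ω) * ‖deriv f w‖ ≤ 2 * infDist (f w) (frontier (f '' Ω)) := by
  rcases (infDist_nonneg (x := w) (s := frontier Ω)).eq_or_lt with h0 | hr
  · rw [← h0, zero_mul]
    exact mul_nonneg zero_le_two infDist_nonneg
  have hball := ball_infDist_frontier_subset hw
  have hfr : (frontier (f '' Ω)).Nonempty :=
    nonempty_frontier_iff.2 ⟨⟨f w, mem_image_of_mem f hw⟩, nonempty_compl.1 hfΩc⟩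
  have := le_infDist_frontier_of_ball_subset hfΩ hfr
    ((Complex.ball_subset_image_of_convex hr (hf.mono hball) (hinj.mono hball)
      (hconv _ _ hball)).trans (image_mono hball))
  linarith

lemma csInf_image_le_mul_csInf_image {α : Type*} {S : Set α} {A B : α → ℝ} {c : ℝ} (hc : 0 < c)
    (hS : S.Nonempty) (hA : BddBelow (A '' S)) (h : ∀ z ∈ S, A z ≤ c * B z) :
    sInf (A '' S) ≤ c * sInf (B '' S) := by
  rw [← div_le_iff₀' hc]
  refine le_csInf (hS.image B) ?_
  rintro _ ⟨z, hz, rfl⟩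
  rw [div_le_iff₀' hc]
  exact (csInf_le hA (mem_image_of_mem A hz)).trans (h z hz)

lemma div_le_mul_div_of_mul_le {x y t a c : ℝ} (ha : 0 < a) (ht : 0 ≤ t) (h : x * a ≤ c * y) :
    x / t ≤ c * (y / (t * a)) := by
  rw [← mul_div_mul_right x t ha.ne', ← mul_div_assoc]
  exact div_le_div_of_nonneg_right h (mul_nonneg ht ha.le)

theorem C_le_two_C_image_general (Ω : Set ℂ) (hΩ : IsHyperbolicDomain Ω) (p : ℂ → ℂ)
    (hmaps : MapsTo p (ball (0 : ℂ) 1) Ω)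
    (f : ℂ → ℂ) (hinj : InjOn f Ω) (hfdiff : DifferentiableOn ℂ f Ω)
    (himg : IsHyperbolicDomain (f '' Ω))
    (hconv : ∀ (c : ℂ) (r : ℝ), ball c r ⊆ Ω → Convex ℝ (f '' ball c r)) :
    sInf ((fun z => Metric.infDist (p z) (frontier Ω) /
        ((1 - ‖z‖ ^ 2) * ‖deriv p z‖)) '' ball (0 : ℂ) 1) ≤
      2 * sInf ((fun z => Metric.infDist (f (p z)) (frontier (f '' Ω)) /
        ((1 - ‖z‖ ^ 2) * (‖deriv f (p z)‖ * ‖deriv p z‖))) ''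
          ball (0 : ℂ) 1) := by
  obtain ⟨hΩo, -, -⟩ := hΩ
  obtain ⟨hfΩo, -, hfΩc⟩ := himg
  have ht : ∀ z ∈ ball (0 : ℂ) 1, 0 ≤ 1 - ‖z‖ ^ 2 := fun z hz =>
    sub_nonneg.2 (pow_le_one₀ (norm_nonneg z) (mem_ball_zero_iff.1 hz).le)
  refine csInf_image_le_mul_csInf_image two_pos (nonempty_ball.2 one_pos) ⟨0, ?_⟩ fun z hz => ?_
  · rintro _ ⟨z, hz, rfl⟩
    exact div_nonneg infDist_nonneg (mul_nonneg (ht z hz) (norm_nonneg _))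
  have hf' := norm_pos_iff.2 (Complex.deriv_ne_zero_of_injOn hΩo hfdiff hinj (hmaps hz))
  rw [← mul_assoc, mul_right_comm]
  exact div_le_mul_div_of_mul_le hf' (mul_nonneg (ht z hz) (norm_nonneg _))
    (infDist_frontier_mul_norm_deriv_le hfdiff hinj hconv hfΩo hfΩc.nonempty (hmaps hz))

theorem C_le_two_C_image (Ω : Set ℂ) (hΩ : IsHyperbolicDomain Ω) (p : ℂ → ℂ)
    (hmaps : MapsTo p (ball (0 : ℂ) 1) Ω)
    (hsurj : SurjOn p (ball (0 : ℂ) 1) Ω)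
    (hdiff : DifferentiableOn ℂ p (ball (0 : ℂ) 1))
    (hcov : IsCoveringMap (Set.MapsTo.restrict p (ball (0 : ℂ) 1) Ω hmaps))
    (f : ℂ → ℂ) (hinj : InjOn f Ω) (hfdiff : DifferentiableOn ℂ f Ω)
    (himg : IsHyperbolicDomain (f '' Ω))
    (hconv : ∀ (c : ℂ) (r : ℝ), ball c r ⊆ Ω → Convex ℝ (f '' ball c r)) :
    sInf ((fun z => Metric.infDist (p z) (frontier Ω) /
        ((1 - ‖z‖ ^ 2) * ‖deriv p z‖)) '' ball (0 : ℂ) 1) ≤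
      2 * sInf ((fun z => Metric.infDist (f (p z)) (frontier (f '' Ω)) /
        ((1 - ‖z‖ ^ 2) * (‖deriv f (p z)‖ * ‖deriv p z‖))) ''
          ball (0 : ℂ) 1) :=
  C_le_two_C_image_general Ω hΩ p hmaps f hinj hfdiff himg hconv
end
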